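/- Let N ≥ 1. The map I^R sending L ∈ LR^N(ℝ²) to the pair (path-connected component of M_O(L) in LO^N(ℝ²), Car(L)) induces a well-defined bijection between the set π₀(LR^N(ℝ²)) of path-connected components of LR^N(ℝ²) and the product π₀(LO^N(ℝ²)) × {−1,1}^N. In particular I^R is surjective: for every path-connected component X of LO^N(ℝ²) and every S ∈ {−1,1}^N there exists L ∈ LR^N(ℝ²) with M_O(L) ∈ X and Car(L) = S. -/

import Mathlib

open Real Set
open scoped Classical

noncomputable section

abbrev Pt : Type := EuclideanSpace ℝ (Fin 2)

noncomputable def pt (x y : ℝ) : Pt := (WithLp.equiv 2 (Fin 2 → ℝ)).symm ![x, y]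

def dot (u v : Pt) : ℝ := u 0 * v 0 + u 1 * v 1

noncomputable def nvec (θ : Real.Angle) : Pt := pt (-θ.sin) θ.cos

noncomputable def dirvec (θ : Real.Angle) : Pt := pt θ.cos θ.sin

noncomputable def angleOf (v : Pt) : Real.Angle := ((Complex.arg ⟨v 0, v 1⟩ : ℝ) : Real.Angle)

/-- The space of `N`-polygonal chains `(ℝ²)^{N+2}`. -/
abbrev Chain (N : ℕ) := Fin (N + 2) → Pt

/-- Access the `i`-th point of a chain (junk value `0` out of range). -/
def cg {N : ℕ} (c : Chain N) (i : ℕ) : Pt := if h : i < N + 2 then c ⟨i, h⟩ else 0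

/-- The `j`-th ray of a chain: `R_0 = (c_0,c_1]`, `R_j = [c_j, c_{j+1}]`. -/
def ray {N : ℕ} (c : Chain N) (j : ℕ) : Set Pt :=
  if j = 0 then segment ℝ (cg c 0) (cg c 1) \ {cg c 0}
  else segment ℝ (cg c j) (cg c (j + 1))

def Obscured {N : ℕ} (c : Chain N) : Prop :=
  cg c 0 = cg c 1 ∨
    ∃ j k : ℕ, j ≤ N ∧ 1 ≤ k ∧ k ≤ N + 1 ∧ k ≠ j ∧ k ≠ j + 1 ∧ cg c k ∈ ray c j

def Grazing {N : ℕ} (c : Chain N) : Prop :=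
  ∃ i : ℕ, 1 ≤ i ∧ i ≤ N ∧ cg c i ∈ openSegment ℝ (cg c (i - 1)) (cg c (i + 1))

/-- Obscuration-free, non-grazing chains. -/
def LO (N : ℕ) : Set (Chain N) := {c | ¬Obscured c ∧ ¬Grazing c}

/-- Access the angle of the `j`-th mirror, `1 ≤ j ≤ N` (junk out of range). -/
def θg {N : ℕ} (θ : Fin N → Real.Angle) (j : ℕ) : Real.Angle :=
  if h : j - 1 < N then θ ⟨j - 1, h⟩ else 0

/-- Reflexion condition: at each mirror both adjacent dot products with `n(θ_j)`
are nonzero and of the same sign. -/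
def IsReflexive {N : ℕ} (c : Chain N) (θ : Fin N → Real.Angle) : Prop :=
  ∀ j : ℕ, 1 ≤ j → j ≤ N →
    0 < dot (cg c (j + 1) - cg c j) (nvec (θg θ j)) *
        dot (cg c (j - 1) - cg c j) (nvec (θg θ j))

abbrev RChain (N : ℕ) := Chain N × (Fin N → Real.Angle)

/-- The space of reflexive polygonal chains. -/
def LR (N : ℕ) : Set (RChain N) := {L | L.1 ∈ LO N ∧ IsReflexive L.1 L.2}

/-- The open arc `α + ε·(0,π)` in `ℝ/2πℤ`. -/
def arc (α : Real.Angle) (ε : ℤ) : Set Real.Angle :=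
  {β | ∃ s : ℝ, 0 < s ∧ s < π ∧ β = α + (((ε : ℝ) * s : ℝ) : Real.Angle)}

/-- Positive orientation set of the `j`-th mirror. -/
def APlus {N : ℕ} (c : Chain N) (j : ℕ) : Set Real.Angle :=
  arc (angleOf (cg c j - cg c (j - 1))) ((-1) ^ j) ∩
    arc (angleOf (cg c j - cg c (j + 1))) ((-1) ^ j)

/-- Negative orientation set of the `j`-th mirror. -/
def AMinus {N : ℕ} (c : Chain N) (j : ℕ) : Set Real.Angle :=
  arc (angleOf (cg c j - cg c (j - 1))) ((-1) ^ (j + 1)) ∩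
    arc (angleOf (cg c j - cg c (j + 1))) ((-1) ^ (j + 1))

/-- The characteristic: index `j : Fin N` corresponds to the `(j+1)`-st mirror. -/
noncomputable def Car {N : ℕ} (L : RChain N) : Fin N → ℤ :=
  fun j => if θg L.2 (j.1 + 1) ∈ APlus L.1 (j.1 + 1) then 1 else -1

abbrev Beam (N : ℕ) := Chain N × Chain N

def IsPrimaryBeam {N : ℕ} (F : Beam N) : Prop :=
  (∀ k : ℕ, 1 ≤ k → k ≤ N → cg F.1 k ≠ cg F.2 k) ∧
  cg F.1 0 = pt (-1) 0 ∧ cg F.2 0 = pt (-1) 0 ∧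
  cg F.1 (N + 1) = cg F.2 (N + 1) ∧
  midpoint ℝ (cg F.1 1) (cg F.2 1) = pt 0 0

def lineThrough (p q : Pt) : Set Pt := {x | ∃ u : ℝ, x = p + u • (q - p)}

noncomputable def pickPt (S : Set Pt) : Pt := if h : S.Nonempty then h.choose else 0

noncomputable def pickR (S : Set ℝ) : ℝ := if h : S.Nonempty then h.choose else 0

/-- `impact F t k` is the `(k+1)`-st impact point `P_{k+1}^t` of the `t`-polygonal chain. -/
noncomputable def impact {N : ℕ} (F : Beam N) (t : ℝ) : ℕ → Pt
  | 0 => (1 - t) • cg F.1 1 + t • cg F.2 1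
  | k + 1 =>
    let i := k + 2
    let prev := impact F t k
    if (lineThrough (cg F.1 (i - 1)) (cg F.1 i) ∩
        lineThrough (cg F.2 (i - 1)) (cg F.2 i)).Nonempty then
      pickPt (lineThrough prev
          (pickPt (lineThrough (cg F.1 (i - 1)) (cg F.1 i) ∩
            lineThrough (cg F.2 (i - 1)) (cg F.2 i))) ∩
        segment ℝ (cg F.1 i) (cg F.2 i))
    else
      (1 - pickR {l : ℝ | prev = (1 - l) • cg F.1 (i - 1) + l • cg F.2 (i - 1)}) • cg F.1 i +
        pickR {l : ℝ | prev = (1 - l) • cg F.1 (i - 1) + l • cg F.2 (i - 1)} • cg F.2 i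

/-- The `t`-polygonal chain `P_t` of a (primary) beam. -/
noncomputable def tChain {N : ℕ} (F : Beam N) (t : ℝ) : Chain N :=
  fun i => if (i : ℕ) = 0 then impact F t 0 + pt (-1) 0 else impact F t ((i : ℕ) - 1)

/-- The `k`-th mirror `S_k = [a_k, b_k]` of a beam. -/
def mirror {N : ℕ} (F : Beam N) (k : ℕ) : Set Pt := segment ℝ (cg F.1 k) (cg F.2 k)

def NonObscuration {N : ℕ} (F : Beam N) : Prop :=
  ∀ j : ℕ, j ≤ N → ∀ t ∈ Icc (0 : ℝ) 1, ∀ k : ℕ,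
    1 ≤ k → k ≤ N + 1 → k ≠ j → k ≠ j + 1 → ray (tChain F t) j ∩ mirror F k = ∅

/-- Four reals are nonzero and of the same sign. -/
def SameSign₄ (x y z w : ℝ) : Prop := 0 < x * y ∧ 0 < x * z ∧ 0 < x * w

/-- A unit normal vector to the direction `u`. -/
noncomputable def normalOf (u : Pt) : Pt := ‖u‖⁻¹ • pt (-u 1) (u 0)

def ReflexionCond {N : ℕ} (F : Beam N) : Prop :=
  ∀ i : ℕ, 1 ≤ i → i ≤ N →
    SameSign₄
      (dot (cg F.1 (i - 1) - cg F.1 i) (normalOf (cg F.2 i - cg F.1 i)))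
      (dot (cg F.2 (i - 1) - cg F.2 i) (normalOf (cg F.2 i - cg F.1 i)))
      (dot (cg F.1 (i + 1) - cg F.1 i) (normalOf (cg F.2 i - cg F.1 i)))
      (dot (cg F.2 (i + 1) - cg F.2 i) (normalOf (cg F.2 i - cg F.1 i)))

/-- The space of `N`-beams. -/
def Faisc (N : ℕ) : Set (Beam N) :=
  {F | IsPrimaryBeam F ∧ NonObscuration F ∧ ReflexionCond F}

/-- The centered polygonal chain `M(F) = P_{1/2}`. -/
noncomputable def MF {N : ℕ} (F : Beam N) : Chain N := tChain F (1 / 2)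

/-- The reflexive polygonal chain induced by a beam. -/
noncomputable def MR {N : ℕ} (F : Beam N) : RChain N :=
  (MF F, fun j => angleOf (cg F.1 (j.1 + 1) - cg F.2 (j.1 + 1)))

/-- The characteristic of a beam. -/
noncomputable def CarF {N : ℕ} (F : Beam N) : Fin N → ℤ := Car (MR F)

/-- The pair of polygonal chains `P_l(L)` built from a reflexive chain and mirror
half-lengths `la, lb` (indexed by `1 ≤ j ≤ N`). -/
noncomputable def Pl {N : ℕ} (L : RChain N) (la lb : ℕ → ℝ) : Beam N :=
  (fun i => if 1 ≤ (i : ℕ) ∧ (i : ℕ) ≤ N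
      then L.1 i + la (i : ℕ) • dirvec (θg L.2 (i : ℕ)) else L.1 i,
   fun i => if 1 ≤ (i : ℕ) ∧ (i : ℕ) ≤ N
      then L.1 i - lb (i : ℕ) • dirvec (θg L.2 (i : ℕ)) else L.1 i)

/-- Minimal mirror-to-mirror distance of a reflexive chain. -/
noncomputable def dR {N : ℕ} (L : RChain N) : ℝ :=
  sInf {r | ∃ i : ℕ, 1 ≤ i ∧ i ≤ N ∧
    r = min |dot (cg L.1 (i - 1) - cg L.1 i) (nvec (θg L.2 i))|
          |dot (cg L.1 (i + 1) - cg L.1 i) (nvec (θg L.2 i))|}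

/-- Minimal distance from the non-adjacent mirrors to the rays. -/
noncomputable def dO {N : ℕ} (L : RChain N) : ℝ :=
  sInf {r | ∃ j k : ℕ, j ≤ N ∧ 1 ≤ k ∧ k ≤ N + 1 ∧ k ≠ j ∧ k ≠ j + 1 ∧
    r = Metric.infDist (cg L.1 k) (ray L.1 j)}

/-- `K = max_{1 ≤ j ≤ N} max (la j) (lb j)`. -/
noncomputable def Kmax (N : ℕ) (la lb : ℕ → ℝ) : ℝ :=
  sSup {r | ∃ j : ℕ, 1 ≤ j ∧ j ≤ N ∧ r = max (la j) (lb j)}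

/-- The subbeam `F_μ` of a beam. -/
noncomputable def subBeam {N : ℕ} (F : Beam N) (μ : ℝ) : Beam N :=
  (fun i => if (i : ℕ) = 0 then pt (-1) 0 else tChain F ((1 - μ) / 2) i,
   fun i => if (i : ℕ) = 0 then pt (-1) 0 else tChain F ((1 + μ) / 2) i)
/-! ### Auxiliary lemmas -/

section Aux

lemma pt_app0 (x y : ℝ) : pt x y 0 = x := rfl
lemma pt_app1 (x y : ℝ) : pt x y 1 = y := rfl

def toC (v : Pt) : ℂ := ⟨v 0, v 1⟩

lemma toC_ne_zero {v : Pt} (hv : v ≠ 0) : toC v ≠ 0 := by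
  intro h
  apply hv
  have h0 : v 0 = 0 := congrArg Complex.re h
  have h1 : v 1 = 0 := congrArg Complex.im h
  ext i
  fin_cases i <;> simp [h0, h1]

lemma abs_toC (v : Pt) : ‖toC v‖ = ‖v‖ := by
  rw [EuclideanSpace.norm_eq, Complex.norm_def, Complex.normSq_apply]
  simp [toC, Fin.sum_univ_two]
  ring_nf

lemma angleOf_eq (v : Pt) : angleOf v = ((Complex.arg (toC v) : ℝ) : Real.Angle) := rfl

lemma dot_nvec {u : Pt} (hu : u ≠ 0) (θ : Real.Angle) :
    dot u (nvec θ) = ‖u‖ * Real.Angle.sin (angleOf u - θ) := by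
  induction θ using Real.Angle.induction_on with
  | h t =>
    have hz := toC_ne_zero hu
    have habs : ‖toC u‖ ≠ 0 := by simpa using hz
    have hre : u 0 = ‖toC u‖ * Real.cos (Complex.arg (toC u)) := by
      rw [Complex.cos_arg hz]; field_simp [toC]
      rfl
    have him : u 1 = ‖toC u‖ * Real.sin (Complex.arg (toC u)) := by
      rw [Complex.sin_arg]; field_simp [toC]
      rfl
    rw [angleOf_eq, ← Real.Angle.coe_sub, Real.Angle.sin_coe, ← abs_toC]
    simp only [dot, nvec, pt_app0, pt_app1, Real.Angle.sin_coe, Real.Angle.cos_coe,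
      Real.sin_sub]
    rw [hre, him]; ring

lemma dot_dirvec {u : Pt} (hu : u ≠ 0) (θ : Real.Angle) :
    dot u (dirvec θ) = ‖u‖ * Real.Angle.cos (angleOf u - θ) := by
  induction θ using Real.Angle.induction_on with
  | h t =>
    have hz := toC_ne_zero hu
    have habs : ‖toC u‖ ≠ 0 := by simpa using hz
    have hre : u 0 = ‖toC u‖ * Real.cos (Complex.arg (toC u)) := by
      rw [Complex.cos_arg hz]; field_simp [toC]
      rfl
    have him : u 1 = ‖toC u‖ * Real.sin (Complex.arg (toC u)) := by
      rw [Complex.sin_arg]; field_simp [toC]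
      rfl
    rw [angleOf_eq, ← Real.Angle.coe_sub, Real.Angle.cos_coe, ← abs_toC]
    simp only [dot, dirvec, pt_app0, pt_app1, Real.Angle.sin_coe, Real.Angle.cos_coe,
      Real.cos_sub]
    rw [hre, him]; ring

lemma sin_pos_iff_toReal {ψ : Real.Angle} :
    0 < ψ.sin ↔ 0 < ψ.toReal ∧ ψ.toReal < π := by
  rw [← Real.Angle.sin_toReal]
  constructor
  · intro h
    constructor
    · by_contra hle
      exact absurd h (not_lt.2 (Real.sin_nonpos_of_nonpos_of_neg_pi_le (not_lt.1 hle)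
        (ψ.neg_pi_lt_toReal.le)))
    · rcases lt_or_eq_of_le ψ.toReal_le_pi with h' | h'
      · exact h'
      · rw [h'] at h; simp at h
  · intro ⟨h1, h2⟩; exact Real.sin_pos_of_pos_of_lt_pi h1 h2

lemma mem_arc_iff {α θ : Real.Angle} {ε : ℤ} (hε : ε = 1 ∨ ε = -1) :
    θ ∈ arc α ε ↔ 0 < (ε : ℝ) * Real.Angle.sin (θ - α) := by
  constructor
  · rintro ⟨s, hs0, hsπ, rfl⟩
    rw [add_sub_cancel_left, Real.Angle.sin_coe]
    rcases hε with rfl | rfl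
    · simpa using Real.sin_pos_of_pos_of_lt_pi hs0 hsπ
    · simp only [Int.cast_neg, Int.cast_one, neg_one_mul, Real.sin_neg]
      simpa using Real.sin_pos_of_pos_of_lt_pi hs0 hsπ
  · intro h
    rcases hε with rfl | rfl
    · simp only [Int.cast_one, one_mul] at h
      obtain ⟨h1, h2⟩ := sin_pos_iff_toReal.1 h
      refine ⟨(θ - α).toReal, h1, h2, ?_⟩
      rw [Int.cast_one, one_mul, Real.Angle.coe_toReal]
      abel
    · simp only [Int.cast_neg, Int.cast_one, neg_one_mul, neg_pos] at h
      have h' : 0 < (-(θ - α)).sin := by rw [Real.Angle.sin_neg]; linarith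
      obtain ⟨h1, h2⟩ := sin_pos_iff_toReal.1 h'
      refine ⟨(-(θ - α)).toReal, h1, h2, ?_⟩
      rw [Int.cast_neg, Int.cast_one, neg_one_mul, Real.Angle.coe_neg,
        Real.Angle.coe_toReal]
      abel

lemma convex_mem_Ioo {a b t : ℝ} (ha1 : 0 < a) (ha2 : a < π) (hb1 : 0 < b) (hb2 : b < π)
    (ht0 : 0 ≤ t) (ht1 : t ≤ 1) : 0 < a + t * (b - a) ∧ a + t * (b - a) < π := by
  have e1 : a + t * (b - a) = (1 - t) * a + t * b := by ring
  constructor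
  · rw [e1]
    rcases eq_or_lt_of_le ht0 with h | h
    · rw [← h]; simp; linarith
    · nlinarith
  · rw [e1]
    rcases eq_or_lt_of_le ht1 with h | h
    · rw [h]; simp; linarith
    · nlinarith

lemma arc_convex {α : Real.Angle} {ε : ℤ} (hε : ε = 1 ∨ ε = -1) {θ1 θ2 : Real.Angle}
    (h1 : θ1 ∈ arc α ε) (h2 : θ2 ∈ arc α ε) {t : ℝ} (ht0 : 0 ≤ t) (ht1 : t ≤ 1) :
    θ1 + ((t * (θ2 - θ1).toReal : ℝ) : Real.Angle) ∈ arc α ε := by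
  obtain ⟨s1, hs10, hs1π, rfl⟩ := h1
  obtain ⟨s2, hs20, hs2π, rfl⟩ := h2
  have hdiff : (α + (((ε : ℝ) * s2 : ℝ) : Real.Angle)) - (α + (((ε : ℝ) * s1 : ℝ) : Real.Angle))
      = (((ε : ℝ) * (s2 - s1) : ℝ) : Real.Angle) := by
    rw [show (ε : ℝ) * (s2 - s1) = (ε : ℝ) * s2 - (ε : ℝ) * s1 by ring, Real.Angle.coe_sub]
    abel
  have hmem : ((ε : ℝ) * (s2 - s1)) ∈ Set.Ioc (-π) π := by
    rcases hε with rfl | rfl <;> constructor <;> push_cast <;> linarith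
  have htr : ((α + (((ε : ℝ) * s2 : ℝ) : Real.Angle)) -
      (α + (((ε : ℝ) * s1 : ℝ) : Real.Angle))).toReal = (ε : ℝ) * (s2 - s1) := by
    rw [hdiff, Real.Angle.toReal_coe_eq_self_iff_mem_Ioc.2 hmem]
  obtain ⟨hc1, hc2⟩ := convex_mem_Ioo hs10 hs1π hs20 hs2π ht0 ht1
  refine ⟨s1 + t * (s2 - s1), hc1, hc2, ?_⟩
  rw [htr, add_assoc, ← Real.Angle.coe_add]
  congr 2
  ring

lemma dot_eq_inner (u v : Pt) : dot u v = inner ℝ u v := by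
  simp [dot, PiLp.inner_apply, RCLike.inner_apply, Fin.sum_univ_two, mul_comm]

lemma dot_pos_of_wu {u v : Pt} (hu : u ≠ 0) (hv : v ≠ 0)
    (hw : ‖v‖ • u + ‖u‖ • v ≠ 0) : 0 < dot (‖v‖ • u + ‖u‖ • v) u := by
  have hcs : inner ℝ (-v) u < ‖(-v : Pt)‖ * ‖u‖ := by
    rw [inner_lt_norm_mul_iff_real]
    intro h
    apply hw
    rw [norm_neg] at h
    have : -(‖u‖ • v) = ‖v‖ • u := by rw [← h]; simp
    rw [← this]; abel
  rw [inner_neg_left, norm_neg] at hcs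
  have h1 : -(‖v‖ * ‖u‖) < (inner ℝ v u : ℝ) := by linarith
  rw [dot_eq_inner, inner_add_left, real_inner_smul_left, real_inner_smul_left,
    real_inner_self_eq_norm_sq]
  have hun : 0 < ‖u‖ := norm_pos_iff.2 hu
  have hvn : 0 < ‖v‖ := norm_pos_iff.2 hv
  nlinarith

lemma dirvec_angleOf {w : Pt} (hw : w ≠ 0) : dirvec (angleOf w) = ‖w‖⁻¹ • w := by
  have hz := toC_ne_zero hw
  have h0 : Real.Angle.cos (angleOf w) = Real.cos (Complex.arg (toC w)) := Real.Angle.cos_coe _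
  have h1 : Real.Angle.sin (angleOf w) = Real.sin (Complex.arg (toC w)) := Real.Angle.sin_coe _
  ext i
  fin_cases i
  · show dirvec (angleOf w) 0 = ‖w‖⁻¹ * w 0
    rw [show dirvec (angleOf w) 0 = (angleOf w).cos from rfl, h0, Complex.cos_arg hz, abs_toC]
    show w 0 / ‖w‖ = _
    rw [div_eq_inv_mul]
  · show dirvec (angleOf w) 1 = ‖w‖⁻¹ * w 1
    rw [show dirvec (angleOf w) 1 = (angleOf w).sin from rfl, h1, Complex.sin_arg, abs_toC]
    show w 1 / ‖w‖ = _
    rw [div_eq_inv_mul]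

lemma grazing_aux {x p q : Pt} (hu : x - p ≠ 0) (hv : x - q ≠ 0)
    (hw : ‖x - q‖ • (x - p) + ‖x - p‖ • (x - q) = 0) : x ∈ openSegment ℝ p q := by
  set nu : ℝ := ‖x - p‖ with hnu
  set nv : ℝ := ‖x - q‖ with hnv
  have hnu0 : 0 < nu := norm_pos_iff.2 hu
  have hnv0 : 0 < nv := norm_pos_iff.2 hv
  have hs : nu + nv ≠ 0 := by positivity
  refine ⟨nv / (nu + nv), nu / (nu + nv), by positivity, by positivity, ?_, ?_⟩
  · field_simp; ring
  · have h2 : (nv / (nu + nv)) • (x - p) + (nu / (nu + nv)) • (x - q) = 0 := by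
      have : (nv / (nu + nv)) • (x - p) + (nu / (nu + nv)) • (x - q)
          = ((nu + nv)⁻¹ : ℝ) • (nv • (x - p) + nu • (x - q)) := by
        rw [smul_add, smul_smul, smul_smul, div_eq_inv_mul, div_eq_inv_mul]
      rw [this, hw, smul_zero]
    have h3 : (nv / (nu + nv)) + (nu / (nu + nv)) = 1 := by field_simp; ring
    have := congrArg (fun z => (nv / (nu + nv)) • p + (nu / (nu + nv)) • q + z) h2
    simp only [add_zero] at this
    rw [← this, smul_sub, smul_sub]
    abel_nf
    rw [← add_smul, h3]
    module

end Aux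
section Aux2

variable {N : ℕ}

def uvv (c : Chain N) (k : ℕ) : Pt := cg c k - cg c (k - 1)
def vvv (c : Chain N) (k : ℕ) : Pt := cg c k - cg c (k + 1)
noncomputable def wvv (c : Chain N) (k : ℕ) : Pt := ‖vvv c k‖ • uvv c k + ‖uvv c k‖ • vvv c k

lemma LO_not_obs {c : Chain N} (hc : c ∈ LO N) : ¬ Obscured c := hc.1
lemma LO_not_graz {c : Chain N} (hc : c ∈ LO N) : ¬ Grazing c := hc.2

lemma cg01_ne {c : Chain N} (hc : c ∈ LO N) : cg c 0 ≠ cg c 1 :=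
  fun h => hc.1 (Or.inl h)

lemma uvv_ne {c : Chain N} (hc : c ∈ LO N) {k : ℕ} (h1 : 1 ≤ k) (h2 : k ≤ N) :
    uvv c k ≠ 0 := by
  rw [uvv, sub_ne_zero]
  intro heq
  rcases eq_or_lt_of_le h1 with h | h
  · exact cg01_ne hc (by rw [← h] at heq; exact heq.symm)
  · refine hc.1 (Or.inr ⟨k, k - 1, h2, by omega, by omega, by omega, by omega, ?_⟩)
    rw [ray, if_neg (by omega)]
    rw [show cg c (k - 1) = cg c k from heq.symm]
    exact left_mem_segment ℝ _ _

lemma vvv_ne {c : Chain N} (hc : c ∈ LO N) {k : ℕ} (h1 : 1 ≤ k) (h2 : k ≤ N) :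
    vvv c k ≠ 0 := by
  rw [vvv, sub_ne_zero]
  intro heq
  rcases eq_or_lt_of_le h1 with h | h
  · -- k = 1
    subst h
    have heq2 : cg c 2 = cg c 1 := by
      rw [show (2 : ℕ) = 1 + 1 by norm_num]; exact heq.symm
    refine hc.1 (Or.inr ⟨0, 2, by omega, by omega, by omega, by omega, by omega, ?_⟩)
    rw [ray, if_pos rfl]
    refine ⟨by rw [heq2]; exact right_mem_segment ℝ _ _, ?_⟩
    simp only [Set.mem_singleton_iff]
    intro h'
    exact cg01_ne hc (by rw [← h']; exact heq2)
  · refine hc.1 (Or.inr ⟨k - 1, k + 1, by omega, by omega, by omega, by omega, by omega, ?_⟩)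
    rw [ray, if_neg (by omega), show k - 1 + 1 = k by omega]
    rw [show cg c (k + 1) = cg c k from heq.symm]
    exact right_mem_segment ℝ _ _

lemma wvv_ne {c : Chain N} (hc : c ∈ LO N) {k : ℕ} (h1 : 1 ≤ k) (h2 : k ≤ N) :
    wvv c k ≠ 0 := by
  intro h
  refine hc.2 ⟨k, h1, h2, ?_⟩
  have := grazing_aux (x := cg c k) (p := cg c (k - 1)) (q := cg c (k + 1))
    (uvv_ne hc h1 h2) (vvv_ne hc h1 h2) h
  exact this

lemma wu_pos {c : Chain N} (hc : c ∈ LO N) {k : ℕ} (h1 : 1 ≤ k) (h2 : k ≤ N) :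
    0 < dot (wvv c k) (uvv c k) :=
  dot_pos_of_wu (uvv_ne hc h1 h2) (vvv_ne hc h1 h2) (wvv_ne hc h1 h2)

lemma wv_pos {c : Chain N} (hc : c ∈ LO N) {k : ℕ} (h1 : 1 ≤ k) (h2 : k ≤ N) :
    0 < dot (wvv c k) (vvv c k) := by
  have hcomm : wvv c k = ‖uvv c k‖ • vvv c k + ‖vvv c k‖ • uvv c k := by
    rw [wvv]; abel
  rw [hcomm]
  exact dot_pos_of_wu (vvv_ne hc h1 h2) (uvv_ne hc h1 h2) (by rw [← hcomm]; exact wvv_ne hc h1 h2)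

lemma cos_angle_pos {u w : Pt} (hu : u ≠ 0) (hw : w ≠ 0) (hd : 0 < dot u w) :
    0 < Real.Angle.cos (angleOf u - angleOf w) := by
  have h1 := dot_dirvec hu (angleOf w)
  rw [dirvec_angleOf hw] at h1
  have h2 : dot u (‖w‖⁻¹ • w) = ‖w‖⁻¹ * dot u w := by
    show u 0 * (‖w‖⁻¹ • w) 0 + u 1 * (‖w‖⁻¹ • w) 1 = _
    show u 0 * (‖w‖⁻¹ * w 0) + u 1 * (‖w‖⁻¹ * w 1) = _
    rw [dot]; ring
  rw [h2] at h1
  have hun : 0 < ‖u‖ := norm_pos_iff.2 hu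
  have hwn : 0 < ‖w‖ := norm_pos_iff.2 hw
  nlinarith [mul_pos (inv_pos.2 hwn) hd]

lemma sigma_arc_mem {u w : Pt} (hu : u ≠ 0) (hw : w ≠ 0) (hd : 0 < dot w u)
    {ε : ℤ} (hε : ε = 1 ∨ ε = -1) :
    (angleOf w + (((ε : ℝ) * (π / 2) : ℝ) : Real.Angle)) ∈ arc (angleOf u) ε := by
  rw [mem_arc_iff hε]
  have hcos := cos_angle_pos hw hu hd
  have hre : angleOf w + (((ε : ℝ) * (π / 2) : ℝ) : Real.Angle) - angleOf u
      = (angleOf w - angleOf u) + (((ε : ℝ) * (π / 2) : ℝ) : Real.Angle) := by abel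
  rw [hre]
  rcases hε with rfl | rfl
  · rw [Int.cast_one, one_mul, one_mul, Real.Angle.sin_add_pi_div_two]
    exact hcos
  · rw [Int.cast_neg, Int.cast_one, neg_one_mul, neg_one_mul, Real.Angle.coe_neg,
      ← sub_eq_add_neg, Real.Angle.sin_sub_pi_div_two, neg_neg]
    exact hcos

end Aux2
section Aux3

variable {N : ℕ}

lemma dot_neg_left (x y : Pt) : dot (-x) y = -(dot x y) := by
  rw [dot_eq_inner, dot_eq_inner, inner_neg_left]

lemma refl_prod {c : Chain N} (hc : c ∈ LO N) {k : ℕ} (h1 : 1 ≤ k) (h2 : k ≤ N)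
    (θ : Real.Angle) :
    dot (cg c (k + 1) - cg c k) (nvec θ) * dot (cg c (k - 1) - cg c k) (nvec θ)
      = (‖vvv c k‖ * ‖uvv c k‖) *
        ((θ - angleOf (vvv c k)).sin * (θ - angleOf (uvv c k)).sin) := by
  have e1 : cg c (k + 1) - cg c k = -(vvv c k) := by rw [vvv, neg_sub]
  have e2 : cg c (k - 1) - cg c k = -(uvv c k) := by rw [uvv, neg_sub]
  rw [e1, e2, dot_neg_left, dot_neg_left, dot_nvec (vvv_ne hc h1 h2) θ,
    dot_nvec (uvv_ne hc h1 h2) θ]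
  have s1 : Real.Angle.sin (angleOf (vvv c k) - θ) = -Real.Angle.sin (θ - angleOf (vvv c k)) := by
    rw [← Real.Angle.sin_neg, neg_sub]
  have s2 : Real.Angle.sin (angleOf (uvv c k) - θ) = -Real.Angle.sin (θ - angleOf (uvv c k)) := by
    rw [← Real.Angle.sin_neg, neg_sub]
  rw [s1, s2]
  ring

lemma refl_signs_iff {c : Chain N} (hc : c ∈ LO N) {k : ℕ} (h1 : 1 ≤ k) (h2 : k ≤ N)
    (θ : Real.Angle) :
    0 < dot (cg c (k + 1) - cg c k) (nvec θ) * dot (cg c (k - 1) - cg c k) (nvec θ)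
      ↔ (0 < (θ - angleOf (uvv c k)).sin ∧ 0 < (θ - angleOf (vvv c k)).sin) ∨
        ((θ - angleOf (uvv c k)).sin < 0 ∧ (θ - angleOf (vvv c k)).sin < 0) := by
  rw [refl_prod hc h1 h2 θ]
  have hA : 0 < ‖vvv c k‖ * ‖uvv c k‖ :=
    mul_pos (norm_pos_iff.2 (vvv_ne hc h1 h2)) (norm_pos_iff.2 (uvv_ne hc h1 h2))
  constructor
  · intro h
    have hprod : 0 < (θ - angleOf (vvv c k)).sin * (θ - angleOf (uvv c k)).sin := by
      rcases mul_pos_iff.1 h with ⟨_, b⟩ | ⟨a, _⟩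
      · exact b
      · linarith
    rcases mul_pos_iff.1 hprod with ⟨a, b⟩ | ⟨a, b⟩
    · exact Or.inl ⟨b, a⟩
    · exact Or.inr ⟨b, a⟩
  · rintro (⟨a, b⟩ | ⟨a, b⟩)
    · exact mul_pos hA (mul_pos b a)
    · exact mul_pos hA (mul_pos_of_neg_of_neg b a)

lemma neg_one_pow_cases (k : ℕ) : ((-1 : ℤ) ^ k = 1 ∨ (-1 : ℤ) ^ k = -1) := by
  rcases Nat.even_or_odd k with h | h
  · exact Or.inl (Even.neg_one_pow h)
  · exact Or.inr (Odd.neg_one_pow h)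

lemma APlus_def (c : Chain N) (k : ℕ) :
    APlus c k = arc (angleOf (uvv c k)) ((-1) ^ k) ∩ arc (angleOf (vvv c k)) ((-1) ^ k) := rfl

lemma AMinus_def (c : Chain N) (k : ℕ) :
    AMinus c k
      = arc (angleOf (uvv c k)) ((-1) ^ (k + 1)) ∩ arc (angleOf (vvv c k)) ((-1) ^ (k + 1)) := rfl

lemma mem_APlus_iff {c : Chain N} (k : ℕ) (θ : Real.Angle) :
    θ ∈ APlus c k ↔
      0 < (((-1 : ℤ) ^ k : ℤ) : ℝ) * (θ - angleOf (uvv c k)).sin ∧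
      0 < (((-1 : ℤ) ^ k : ℤ) : ℝ) * (θ - angleOf (vvv c k)).sin := by
  rw [APlus_def, Set.mem_inter_iff, mem_arc_iff (neg_one_pow_cases k),
    mem_arc_iff (neg_one_pow_cases k)]

lemma θg_succ (θf : Fin N → Real.Angle) (j : Fin N) : θg θf (j.1 + 1) = θf j := by
  simp only [θg, Nat.add_sub_cancel]
  rw [dif_pos j.2]

lemma θg_eq (θf : Fin N → Real.Angle) {k : ℕ} (h1 : 1 ≤ k) (h2 : k ≤ N) :
    θg θf k = θf ⟨k - 1, by omega⟩ := by
  simp only [θg]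
  rw [dif_pos (show k - 1 < N by omega)]

noncomputable def sigAng (S : Fin N → ℤ) (c : Chain N) : Fin N → Real.Angle :=
  fun j => angleOf (wvv c (j.1 + 1)) +
    ((((S j * (-1) ^ (j.1 + 1) : ℤ) : ℝ) * (π / 2) : ℝ) : Real.Angle)

lemma car_cases (L : RChain N) (j : Fin N) : Car L j = 1 ∨ Car L j = -1 := by
  by_cases h : θg L.2 (j.1 + 1) ∈ APlus L.1 (j.1 + 1) <;> simp [Car, h]

lemma car_one_iff {L : RChain N} (hL : L ∈ LR N) (j : Fin N) :
    Car L j = 1 ↔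
      0 < (((-1 : ℤ) ^ (j.1 + 1) : ℤ) : ℝ) *
        (θg L.2 (j.1 + 1) - angleOf (uvv L.1 (j.1 + 1))).sin := by
  have h1 : 1 ≤ j.1 + 1 := by omega
  have h2 : j.1 + 1 ≤ N := j.2
  have hsigns := (refl_signs_iff hL.1 h1 h2 (θg L.2 (j.1 + 1))).1 (hL.2 (j.1 + 1) h1 h2)
  have he := neg_one_pow_cases (j.1 + 1)
  constructor
  · intro hcar
    have hmem : θg L.2 (j.1 + 1) ∈ APlus L.1 (j.1 + 1) := by
      by_contra hm
      simp [Car, hm] at hcar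
    exact ((mem_APlus_iff _ _).1 hmem).1
  · intro hpos
    have hmem : θg L.2 (j.1 + 1) ∈ APlus L.1 (j.1 + 1) := by
      rw [mem_APlus_iff]
      refine ⟨hpos, ?_⟩
      rcases hsigns with ⟨a, b⟩ | ⟨a, b⟩ <;> rcases he with h | h <;>
        rw [h] at hpos ⊢ <;> push_cast at hpos ⊢ <;> linarith
    simp [Car, hmem]

end Aux3
section Aux4

variable {N : ℕ}

lemma sig_eps_cases {S : Fin N → ℤ} (hS : ∀ j, S j = 1 ∨ S j = -1) (j : Fin N) :
    (S j * (-1) ^ (j.1 + 1) : ℤ) = 1 ∨ (S j * (-1) ^ (j.1 + 1) : ℤ) = -1 := by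
  rcases hS j with h | h <;> rcases neg_one_pow_cases (j.1 + 1) with h' | h' <;>
    rw [h, h'] <;> norm_num

lemma sig_arc_mem {c : Chain N} (hc : c ∈ LO N) {S : Fin N → ℤ}
    (hS : ∀ j, S j = 1 ∨ S j = -1) (j : Fin N) :
    sigAng S c j ∈ arc (angleOf (uvv c (j.1 + 1))) (S j * (-1) ^ (j.1 + 1)) ∩
      arc (angleOf (vvv c (j.1 + 1))) (S j * (-1) ^ (j.1 + 1)) := by
  have h1 : 1 ≤ j.1 + 1 := by omega
  have h2 : j.1 + 1 ≤ N := j.2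
  exact ⟨sigma_arc_mem (uvv_ne hc h1 h2) (wvv_ne hc h1 h2) (wu_pos hc h1 h2)
      (sig_eps_cases hS j),
    sigma_arc_mem (vvv_ne hc h1 h2) (wvv_ne hc h1 h2) (wv_pos hc h1 h2) (sig_eps_cases hS j)⟩

lemma sig_mem_LR {c : Chain N} (hc : c ∈ LO N) {S : Fin N → ℤ}
    (hS : ∀ j, S j = 1 ∨ S j = -1) : ((c, sigAng S c) : RChain N) ∈ LR N := by
  refine ⟨hc, ?_⟩
  intro k h1 h2
  obtain ⟨m, rfl⟩ : ∃ m, k = m + 1 := ⟨k - 1, by omega⟩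
  have hm : m < N := by omega
  set j : Fin N := ⟨m, hm⟩ with hj
  have hθ : θg (sigAng S c) (m + 1) = sigAng S c j := θg_succ _ j
  show 0 < dot (cg c (m + 1 + 1) - cg c (m + 1)) (nvec (θg (sigAng S c) (m + 1))) *
      dot (cg c (m + 1 - 1) - cg c (m + 1)) (nvec (θg (sigAng S c) (m + 1)))
  rw [hθ, refl_signs_iff hc h1 h2 _]
  obtain ⟨hu, hv⟩ := sig_arc_mem hc hS j
  rw [mem_arc_iff (sig_eps_cases hS j)] at hu hv
  rcases sig_eps_cases hS j with h | h <;> rw [h] at hu hv <;> push_cast at hu hv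
  · exact Or.inl ⟨by linarith, by linarith⟩
  · exact Or.inr ⟨by linarith, by linarith⟩

lemma APlus_AMinus_disj {c : Chain N} (k : ℕ) (θ : Real.Angle) (hp : θ ∈ APlus c k)
    (hm : θ ∈ AMinus c k) : False := by
  rw [mem_APlus_iff] at hp
  rw [AMinus_def, Set.mem_inter_iff, mem_arc_iff (neg_one_pow_cases (k + 1)),
    mem_arc_iff (neg_one_pow_cases (k + 1))] at hm
  rcases neg_one_pow_cases k with h | h <;>
    rw [pow_succ] at hm <;> rw [h] at hp hm <;> push_cast at hp hm <;>
    · obtain ⟨a, _⟩ := hp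
      obtain ⟨a', _⟩ := hm
      linarith

lemma sig_car {c : Chain N} (hc : c ∈ LO N) {S : Fin N → ℤ}
    (hS : ∀ j, S j = 1 ∨ S j = -1) : Car ((c, sigAng S c) : RChain N) = S := by
  funext j
  have hθ : θg (sigAng S c) (j.1 + 1) = sigAng S c j := θg_succ _ j
  obtain ⟨hu, hv⟩ := sig_arc_mem hc hS j
  rcases hS j with h | h
  · have hε : (S j * (-1) ^ (j.1 + 1) : ℤ) = (-1) ^ (j.1 + 1) := by rw [h, one_mul]
    rw [hε] at hu hv
    have hmem : θg (sigAng S c) (j.1 + 1) ∈ APlus c (j.1 + 1) := by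
      rw [hθ, APlus_def]; exact ⟨hu, hv⟩
    show (if θg (sigAng S c) (j.1 + 1) ∈ APlus c (j.1 + 1) then (1 : ℤ) else -1) = S j
    rw [if_pos hmem, h]
  · have hε : (S j * (-1) ^ (j.1 + 1) : ℤ) = (-1) ^ (j.1 + 1 + 1) := by
      rw [h, pow_succ]; ring
    rw [hε] at hu hv
    have hmem : θg (sigAng S c) (j.1 + 1) ∈ AMinus c (j.1 + 1) := by
      rw [hθ, AMinus_def]; exact ⟨hu, hv⟩
    have hnot : θg (sigAng S c) (j.1 + 1) ∉ APlus c (j.1 + 1) :=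
      fun hmem' => APlus_AMinus_disj _ _ hmem' hmem
    show (if θg (sigAng S c) (j.1 + 1) ∈ APlus c (j.1 + 1) then (1 : ℤ) else -1) = S j
    rw [if_neg hnot, h]

end Aux4
section Aux5

variable {N : ℕ}

lemma mem_AMinus_iff {c : Chain N} (k : ℕ) (θ : Real.Angle) :
    θ ∈ AMinus c k ↔
      0 < (((-1 : ℤ) ^ (k + 1) : ℤ) : ℝ) * (θ - angleOf (uvv c k)).sin ∧
      0 < (((-1 : ℤ) ^ (k + 1) : ℤ) : ℝ) * (θ - angleOf (vvv c k)).sin := by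
  rw [AMinus_def, Set.mem_inter_iff, mem_arc_iff (neg_one_pow_cases (k + 1)),
    mem_arc_iff (neg_one_pow_cases (k + 1))]

lemma refl_of_arcs {c : Chain N} (hc : c ∈ LO N) {k : ℕ} (h1 : 1 ≤ k) (h2 : k ≤ N)
    {θ : Real.Angle} {ε : ℤ} (hε : ε = 1 ∨ ε = -1)
    (hu : θ ∈ arc (angleOf (uvv c k)) ε) (hv : θ ∈ arc (angleOf (vvv c k)) ε) :
    0 < dot (cg c (k + 1) - cg c k) (nvec θ) * dot (cg c (k - 1) - cg c k) (nvec θ) := by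
  rw [refl_signs_iff hc h1 h2 θ]
  rw [mem_arc_iff hε] at hu hv
  rcases hε with rfl | rfl <;> push_cast at hu hv
  · exact Or.inl ⟨by linarith, by linarith⟩
  · exact Or.inr ⟨by linarith, by linarith⟩

lemma car_mem_APlus {L : RChain N} {j : Fin N} (h : Car L j = 1) :
    θg L.2 (j.1 + 1) ∈ APlus L.1 (j.1 + 1) := by
  by_contra hm
  simp [Car, hm] at h

lemma car_not_mem_APlus {L : RChain N} {j : Fin N} (h : Car L j = -1) :
    θg L.2 (j.1 + 1) ∉ APlus L.1 (j.1 + 1) := by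
  intro hm
  simp [Car, hm] at h

lemma refl_mem_union {L : RChain N} (hL : L ∈ LR N) (j : Fin N) :
    θg L.2 (j.1 + 1) ∈ APlus L.1 (j.1 + 1) ∪ AMinus L.1 (j.1 + 1) := by
  have h1 : 1 ≤ j.1 + 1 := by omega
  have h2 : j.1 + 1 ≤ N := j.2
  have hsigns := (refl_signs_iff hL.1 h1 h2 (θg L.2 (j.1 + 1))).1 (hL.2 (j.1 + 1) h1 h2)
  rcases hsigns with ⟨a, b⟩ | ⟨a, b⟩ <;> rcases neg_one_pow_cases (j.1 + 1) with h | h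
  · exact Or.inl ((mem_APlus_iff _ _).2 (by rw [h]; push_cast; constructor <;> linarith))
  · exact Or.inr ((mem_AMinus_iff _ _).2 (by rw [pow_succ, h]; push_cast; constructor <;> linarith))
  · exact Or.inr ((mem_AMinus_iff _ _).2 (by rw [pow_succ, h]; push_cast; constructor <;> linarith))
  · exact Or.inl ((mem_APlus_iff _ _).2 (by rw [h]; push_cast; constructor <;> linarith))

lemma L_mem_arcs {L : RChain N} (hL : L ∈ LR N) (j : Fin N) :
    L.2 j ∈ arc (angleOf (uvv L.1 (j.1 + 1))) (Car L j * (-1) ^ (j.1 + 1)) ∩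
      arc (angleOf (vvv L.1 (j.1 + 1))) (Car L j * (-1) ^ (j.1 + 1)) := by
  have hθ : θg L.2 (j.1 + 1) = L.2 j := θg_succ _ j
  rcases car_cases L j with h | h
  · have hmem := car_mem_APlus h
    rw [hθ, APlus_def] at hmem
    rw [h, one_mul]
    exact hmem
  · have hmem : θg L.2 (j.1 + 1) ∈ AMinus L.1 (j.1 + 1) := by
      rcases refl_mem_union hL j with hm | hm
      · exact absurd hm (car_not_mem_APlus h)
      · exact hm
    rw [hθ, AMinus_def] at hmem
    rw [h, show (-1 : ℤ) * (-1) ^ (j.1 + 1) = (-1) ^ (j.1 + 1 + 1) by rw [pow_succ]; ring]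
    exact hmem

-- continuity lemmas
lemma continuous_toC : Continuous toC := by
  have h : toC = fun v : Pt => ((v 0 : ℂ) + (v 1 : ℂ) * Complex.I) :=
    funext fun v => (Complex.mk_eq_add_mul_I _ _)
  rw [h]
  exact (Complex.continuous_ofReal.comp (PiLp.continuous_apply 2 _ 0)).add
    ((Complex.continuous_ofReal.comp (PiLp.continuous_apply 2 _ 1)).mul continuous_const)

lemma continuousAt_angleOf {v : Pt} (hv : v ≠ 0) : ContinuousAt angleOf v :=
  (Complex.continuousAt_arg_coe_angle (toC_ne_zero hv)).comp continuous_toC.continuousAt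

lemma continuous_cg {k : ℕ} (h : k < N + 2) : Continuous fun c : Chain N => cg c k := by
  have he : (fun c : Chain N => cg c k) = fun c : Chain N => c ⟨k, h⟩ :=
    funext fun c => dif_pos h
  rw [he]
  exact continuous_apply _

lemma continuous_uvv {k : ℕ} (h1 : 1 ≤ k) (h2 : k ≤ N) :
    Continuous fun c : Chain N => uvv c k :=
  Continuous.sub (continuous_cg (by omega)) (continuous_cg (by omega))

lemma continuous_vvv {k : ℕ} (h1 : 1 ≤ k) (h2 : k ≤ N) :
    Continuous fun c : Chain N => vvv c k :=
  Continuous.sub (continuous_cg (by omega)) (continuous_cg (by omega))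

lemma continuous_wvv {k : ℕ} (h1 : 1 ≤ k) (h2 : k ≤ N) :
    Continuous fun c : Chain N => wvv c k :=
  Continuous.add (((continuous_vvv h1 h2).norm).smul (continuous_uvv h1 h2))
    (((continuous_uvv h1 h2).norm).smul (continuous_vvv h1 h2))

lemma continuous_sigAng_comp {X : Type*} [TopologicalSpace X] {f : X → Chain N}
    (hf : Continuous f) (hmem : ∀ x, f x ∈ LO N) (S : Fin N → ℤ) :
    Continuous fun x => sigAng S (f x) := by
  apply continuous_pi
  intro j
  have h1 : 1 ≤ j.1 + 1 := by omega
  have h2 : j.1 + 1 ≤ N := j.2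
  have hw : Continuous fun x => wvv (f x) (j.1 + 1) := (continuous_wvv h1 h2).comp hf
  have hang : Continuous fun x => angleOf (wvv (f x) (j.1 + 1)) := by
    rw [continuous_iff_continuousAt]
    intro x
    exact ContinuousAt.comp (f := fun x => wvv (f x) (j.1 + 1))
      (continuousAt_angleOf (wvv_ne (hmem x) h1 h2)) hw.continuousAt
  exact hang.add continuous_const

end Aux5
section Aux6

variable {N : ℕ}

lemma joinedIn_LO_of_LR {L L' : RChain N} (h : JoinedIn (LR N) L L') :
    JoinedIn (LO N) L.1 L'.1 := by
  obtain ⟨γ, hγ⟩ := h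
  refine ⟨γ.map continuous_fst, fun t => ?_⟩
  simpa using (hγ t).1

lemma sig_joined {c c' : Chain N} (h : JoinedIn (LO N) c c') {S : Fin N → ℤ}
    (hS : ∀ j, S j = 1 ∨ S j = -1) :
    JoinedIn (LR N) ((c, sigAng S c) : RChain N) ((c', sigAng S c') : RChain N) := by
  obtain ⟨γ, hγ⟩ := h
  refine ⟨⟨⟨fun t => (γ t, sigAng S (γ t)), ?_⟩, ?_, ?_⟩, fun t => sig_mem_LR (hγ t) hS⟩
  · exact γ.continuous.prodMk (continuous_sigAng_comp γ.continuous hγ S)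
  · simp
  · simp

lemma joined_sig {L : RChain N} (hL : L ∈ LR N) :
    JoinedIn (LR N) L ((L.1, sigAng (Car L) L.1) : RChain N) := by
  have hS : ∀ j, Car L j = 1 ∨ Car L j = -1 := car_cases L
  refine ⟨⟨⟨fun t => (L.1, fun j => L.2 j +
      ((((t : ℝ) * ((sigAng (Car L) L.1 j - L.2 j).toReal)) : ℝ) : Real.Angle)), ?_⟩, ?_, ?_⟩, ?_⟩
  · refine continuous_const.prodMk (continuous_pi fun j => ?_)
    exact continuous_const.add (Real.Angle.continuous_coe.comp
      (continuous_subtype_val.mul continuous_const))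
  · refine Prod.ext_iff.2 ⟨rfl, ?_⟩
    funext j
    simp
  · refine Prod.ext_iff.2 ⟨rfl, ?_⟩
    funext j
    simp only [Set.Icc.coe_one, one_mul, Real.Angle.coe_toReal]
    exact add_sub_cancel _ _
  · intro t
    refine ⟨hL.1, ?_⟩
    intro k h1 h2
    obtain ⟨m, rfl⟩ : ∃ m, k = m + 1 := ⟨k - 1, by omega⟩
    have hm : m < N := by omega
    set j : Fin N := ⟨m, hm⟩ with hj
    have hθ : θg (fun j => L.2 j +
        ((((t : ℝ) * ((sigAng (Car L) L.1 j - L.2 j).toReal)) : ℝ) : Real.Angle)) (m + 1)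
        = L.2 j + ((((t : ℝ) * ((sigAng (Car L) L.1 j - L.2 j).toReal)) : ℝ) : Real.Angle) :=
      θg_succ _ j
    show 0 < dot (cg L.1 (m + 1 + 1) - cg L.1 (m + 1))
        (nvec (θg (fun j => L.2 j +
          ((((t : ℝ) * ((sigAng (Car L) L.1 j - L.2 j).toReal)) : ℝ) : Real.Angle)) (m + 1))) *
      dot (cg L.1 (m + 1 - 1) - cg L.1 (m + 1))
        (nvec (θg (fun j => L.2 j +
          ((((t : ℝ) * ((sigAng (Car L) L.1 j - L.2 j).toReal)) : ℝ) : Real.Angle)) (m + 1)))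
    rw [hθ]
    have hε := sig_eps_cases hS j
    obtain ⟨hau, hav⟩ := L_mem_arcs hL j
    obtain ⟨hbu, hbv⟩ := sig_arc_mem hL.1 hS j
    exact refl_of_arcs hL.1 h1 h2 hε
      (arc_convex hε hau hbu t.2.1 t.2.2) (arc_convex hε hav hbv t.2.1 t.2.2)

lemma car_joined {L L' : RChain N} (h : JoinedIn (LR N) L L') : Car L = Car L' := by
  obtain ⟨γ, hγ⟩ := h
  funext j
  have h1 : 1 ≤ j.1 + 1 := by omega
  have h2 : j.1 + 1 ≤ N := j.2
  set g : unitInterval → ℝ := fun t =>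
    (((-1 : ℤ) ^ (j.1 + 1) : ℤ) : ℝ) *
      (θg (γ t).2 (j.1 + 1) - angleOf (uvv (γ t).1 (j.1 + 1))).sin with hg
  have hcont : Continuous g := by
    refine continuous_const.mul (Real.Angle.continuous_sin.comp (Continuous.sub ?_ ?_))
    · have he : (fun t : unitInterval => θg (γ t).2 (j.1 + 1))
          = fun t => (γ t).2 ⟨j.1 + 1 - 1, by omega⟩ := funext fun t => θg_eq _ h1 h2
      rw [he]
      exact (continuous_apply _).comp (continuous_snd.comp γ.continuous)
    · have hcu : Continuous fun t : unitInterval => uvv (γ t).1 (j.1 + 1) :=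
        (continuous_uvv h1 h2).comp (continuous_fst.comp γ.continuous)
      rw [continuous_iff_continuousAt]
      intro t
      exact ContinuousAt.comp (f := fun t : unitInterval => uvv (γ t).1 (j.1 + 1))
        (continuousAt_angleOf (uvv_ne (hγ t).1 h1 h2)) hcu.continuousAt
  have hne : ∀ t, g t ≠ 0 := by
    intro t
    have hsigns := (refl_signs_iff (hγ t).1 h1 h2 (θg (γ t).2 (j.1 + 1))).1
      ((hγ t).2 (j.1 + 1) h1 h2)
    have hs : (θg (γ t).2 (j.1 + 1) - angleOf (uvv (γ t).1 (j.1 + 1))).sin ≠ 0 := by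
      rcases hsigns with ⟨a, _⟩ | ⟨a, _⟩ <;> intro hh <;> rw [hh] at a <;> linarith
    have hcast : (((-1 : ℤ) ^ (j.1 + 1) : ℤ) : ℝ) ≠ 0 := by
      rcases neg_one_pow_cases (j.1 + 1) with h | h <;> rw [h] <;> norm_num
    exact mul_ne_zero hcast hs
  have hsign : 0 < g 0 ↔ 0 < g 1 := by
    set U : Set unitInterval := {t | 0 < g t} with hU
    set V : Set unitInterval := {t | g t < 0} with hV
    have hUo : IsOpen U := isOpen_lt continuous_const hcont
    have hVo : IsOpen V := isOpen_lt hcont continuous_const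
    have hdis : Disjoint U V := by
      rw [Set.disjoint_left]
      intro t htU htV
      have ha : 0 < g t := htU
      have hb : g t < 0 := htV
      linarith
    have hcover : (Set.univ : Set unitInterval) ⊆ U ∪ V := by
      intro t _
      by_cases h : 0 < g t
      · exact Or.inl h
      · exact Or.inr (lt_of_le_of_ne (not_lt.1 h) (hne t))
    rcases isPreconnected_univ.subset_or_subset hUo hVo hdis hcover with h | h
    · exact ⟨fun _ => h (Set.mem_univ 1), fun _ => h (Set.mem_univ 0)⟩
    · constructor <;> intro hh
      · exact absurd (show g 0 < 0 from h (Set.mem_univ 0)) (not_lt.2 (le_of_lt hh))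
      · exact absurd (show g 1 < 0 from h (Set.mem_univ 1)) (not_lt.2 (le_of_lt hh))
  have hL1 : Car L j = 1 ↔ 0 < g 0 := by
    rw [← γ.source]
    exact car_one_iff (hγ 0) j
  have hL2 : Car L' j = 1 ↔ 0 < g 1 := by
    rw [← γ.target]
    exact car_one_iff (hγ 1) j
  by_cases h0 : 0 < g 0
  · rw [hL1.2 h0, hL2.2 (hsign.1 h0)]
  · rcases car_cases L j with hA | hA
    · exact absurd (hL1.1 hA) h0
    · rcases car_cases L' j with hB | hB
      · exact absurd (hL2.1 hB) (fun hh => h0 (hsign.2 hh))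
      · rw [hA, hB]

end Aux6
/-- `I^R = (N^R, Car)` induces a bijection
`π₀(LR^N) ≃ π₀(LO^N) × {-1,1}^N`, and it is surjective. -/
theorem statement6 (N : ℕ) (hN : 1 ≤ N) :
    (∃ e : ZerothHomotopy (LR N) ≃ ZerothHomotopy (LO N) × (Fin N → ({-1, 1} : Set ℤ)),
      ∀ (L : RChain N) (hL : L ∈ LR N),
        (e (Quotient.mk (pathSetoid _) ⟨L, hL⟩)).1
            = Quotient.mk (pathSetoid _) ⟨L.1, hL.1⟩ ∧
        ∀ j : Fin N, ((e (Quotient.mk (pathSetoid _) ⟨L, hL⟩)).2 j : ℤ) = Car L j) ∧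
    ∀ (c : Chain N), c ∈ LO N → ∀ S : Fin N → ℤ, (∀ j, S j = 1 ∨ S j = -1) →
      ∃ L : RChain N, L ∈ LR N ∧ JoinedIn (LO N) L.1 c ∧ Car L = S := by
  constructor
  · -- the bijection
    let f : ↥(LR N) → ZerothHomotopy (LO N) × (Fin N → ({-1, 1} : Set ℤ)) :=
      fun L => (Quotient.mk (pathSetoid _) (⟨L.1.1, L.2.1⟩ : ↥(LO N)),
        fun j => ⟨Car L.1 j, by rcases car_cases L.1 j with h | h <;> simp [h]⟩)
    have hresp : ∀ a b : ↥(LR N), (pathSetoid ↥(LR N)).r a b → f a = f b := by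
      intro a b hab
      have hJ : JoinedIn (LR N) a.1 b.1 := (joinedIn_iff_joined a.2 b.2).2 hab
      have hJO : JoinedIn (LO N) a.1.1 b.1.1 := joinedIn_LO_of_LR hJ
      have hcar : Car a.1 = Car b.1 := car_joined hJ
      refine Prod.ext_iff.2 ⟨?_, ?_⟩
      · exact Quotient.sound ((joinedIn_iff_joined a.2.1 b.2.1).1 hJO)
      · funext j
        exact Subtype.ext (congrFun hcar j)
    let fbar : ZerothHomotopy (LR N) → ZerothHomotopy (LO N) × (Fin N → ({-1, 1} : Set ℤ)) :=
      Quotient.lift f hresp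
    have hinj : Function.Injective fbar := by
      intro q1 q2
      refine Quotient.inductionOn₂ q1 q2 ?_
      intro a b h
      obtain ⟨h1, h2⟩ := Prod.ext_iff.1 h
      have hJO : JoinedIn (LO N) a.1.1 b.1.1 :=
        (joinedIn_iff_joined a.2.1 b.2.1).2 (Quotient.exact h1)
      have hcar : Car a.1 = Car b.1 := funext fun j => Subtype.ext_iff.1 (congrFun h2 j)
      apply Quotient.sound
      have hstep1 : JoinedIn (LR N) a.1 ((a.1.1, sigAng (Car a.1) a.1.1) : RChain N) :=
        joined_sig a.2
      have hstep2 : JoinedIn (LR N) ((a.1.1, sigAng (Car a.1) a.1.1) : RChain N)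
          ((b.1.1, sigAng (Car a.1) b.1.1) : RChain N) := sig_joined hJO (car_cases a.1)
      have hstep3 : JoinedIn (LR N) b.1 ((b.1.1, sigAng (Car b.1) b.1.1) : RChain N) :=
        joined_sig b.2
      rw [← hcar] at hstep3
      exact (joinedIn_iff_joined a.2 b.2).1 ((hstep1.trans hstep2).trans hstep3.symm)
    have hsurj : Function.Surjective fbar := by
      rintro ⟨q, S⟩
      refine Quotient.inductionOn q fun c => ?_
      have hS'' : ∀ j, ((S j : ℤ)) = 1 ∨ ((S j : ℤ)) = -1 := by
        intro j
        have h := (S j).2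
        simp only [Set.mem_insert_iff, Set.mem_singleton_iff] at h
        exact h.symm
      refine ⟨Quotient.mk _ ⟨((c.1, sigAng (fun j => (S j : ℤ)) c.1) : RChain N),
        sig_mem_LR c.2 hS''⟩, ?_⟩
      refine Prod.ext_iff.2 ⟨?_, ?_⟩
      · exact congrArg (Quotient.mk _) (Subtype.ext rfl)
      · funext j
        exact Subtype.ext (congrFun (sig_car c.2 hS'') j)
    refine ⟨Equiv.ofBijective fbar ⟨hinj, hsurj⟩, ?_⟩
    intro L hL
    exact ⟨rfl, fun j => rfl⟩
  · intro c hc S hS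
    exact ⟨(c, sigAng S c), sig_mem_LR hc hS, JoinedIn.refl hc, sig_car hc hS⟩
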